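/- Fix an integer N ≥ 3, η > 0, and r > 0. There exists a constant C > 0 depending only on N such that the following holds: for every A ∈ Π₊(η, r), every ε ∈ (0, 1/C), and every u ∈ W^{1,2}(A) with |u| < ε H^{N-1}-almost everywhere on A and satisfying the volume constraint ∫_A (1+u)^N dH^{N-1} = H^{N-1}(A), the mean ū := (1 / H^{N-1}(A)) ∫_A u dH^{N-1} satisfies |ū| ≤ (Cε / ((1 − Cε) H^{N-1}(A)^{1/2})) ‖u − ū‖_{L²(A)}. -/

import Mathlib

open MeasureTheory Filter Topology
open scoped ENNReal NNReal RealInnerProductSpace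

noncomputable section

namespace AlmostConvexCones

/-- Euclidean space `ℝ^N`. -/
abbrev Euc (N : ℕ) := EuclideanSpace ℝ (Fin N)

/-- The unit sphere `S^{N-1} ⊆ ℝ^N`. -/
def unitSphere (N : ℕ) : Set (Euc N) := Metric.sphere (0 : Euc N) 1

/-- The last coordinate `ξ_N` of a point `ξ ∈ ℝ^N`. -/
def lastCoord (N : ℕ) (ξ : Euc N) : ℝ :=
  if h : 0 < N then ξ ⟨N - 1, Nat.sub_lt h Nat.one_pos⟩ else 0

/-- The spherical cap `S₊(η) = {ξ ∈ S^{N-1} : ξ_N > η}`. -/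
def cap (N : ℕ) (η : ℝ) : Set (Euc N) := {ξ | ξ ∈ unitSphere N ∧ η < lastCoord N ξ}

/-- The open cone `𝒞_A = {tξ : t > 0, ξ ∈ A}` generated by a set of directions `A ⊆ S^{N-1}`. -/
def cone (N : ℕ) (A : Set (Euc N)) : Set (Euc N) :=
  {x | ∃ t : ℝ, 0 < t ∧ ∃ ξ ∈ A, x = t • ξ}

/-- The intrinsic (geodesic) distance on the unit sphere. -/
def geoDist (N : ℕ) (x y : Euc N) : ℝ := Real.arccos ⟪x, y⟫

/-- The open geodesic ball in the unit sphere with center `p` and radius `ρ`. -/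
def geoBall (N : ℕ) (p : Euc N) (ρ : ℝ) : Set (Euc N) :=
  {ξ | ξ ∈ unitSphere N ∧ geoDist N p ξ < ρ}

/-- The boundary (frontier) of `A ⊆ S^{N-1}` relative to the sphere. -/
def sphFrontier (N : ℕ) (A : Set (Euc N)) : Set (Euc N) :=
  closure A ∩ closure (unitSphere N \ A)

/-- Hausdorff distance between subsets of the sphere, with respect to the intrinsic metric. -/
def geoHausDist (N : ℕ) (X Y : Set (Euc N)) : ℝ :=
  max (⨆ x ∈ X, ⨅ y ∈ Y, geoDist N x y) (⨆ y ∈ Y, ⨅ x ∈ X, geoDist N x y)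

/-- Uniform interior and exterior geodesic ball condition of radius `ρ` (uniform `C^{1,1}`). -/
def UniformBallCond (N : ℕ) (ρ : ℝ) (A : Set (Euc N)) : Prop :=
  ∀ x ∈ sphFrontier N A,
    (∃ p ∈ unitSphere N, geoBall N p ρ ⊆ A ∧ geoDist N p x = ρ) ∧
    (∃ q ∈ unitSphere N, geoBall N q ρ ⊆ unitSphere N \ A ∧ geoDist N q x = ρ)

/-- The class `Π₊(η, r)`: open sets compactly contained in the cap `S₊(η)` satisfying the
uniform interior/exterior ball condition of radius `r`. -/
def PiPlus (N : ℕ) (η ρ : ℝ) : Set (Set (Euc N)) :=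
  {A | IsOpen {ξ : unitSphere N | (ξ : Euc N) ∈ A} ∧ closure A ⊆ cap N η ∧
    UniformBallCond N ρ A}

/-- The surface measure `H^{N-1}` (the `(N-1)`-dimensional Hausdorff measure on `ℝ^N`). -/
def surf (N : ℕ) : Measure (Euc N) := μH[(N : ℝ) - 1]

/-- The tangential (spherical) gradient of a function `f : ℝ^N → ℝ` at `ξ ∈ S^{N-1}`. -/
def sphGrad (N : ℕ) (f : Euc N → ℝ) (ξ : Euc N) : Euc N :=
  gradient f ξ - ⟪gradient f ξ, ξ⟫ • ξ

/-- Membership in the Sobolev space `W^{1,2}(A)` (defined as completion of smooth functions):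
`u` with tangential gradient `g` is an `L²(A)`-limit of smooth functions together with
their tangential gradients. -/
def MemW12 (N : ℕ) (A : Set (Euc N)) (u : Euc N → ℝ) (g : Euc N → Euc N) : Prop :=
  AEStronglyMeasurable u ((surf N).restrict A) ∧
  AEStronglyMeasurable g ((surf N).restrict A) ∧
  Integrable (fun ξ => (u ξ) ^ 2 + ‖g ξ‖ ^ 2) ((surf N).restrict A) ∧
  ∃ f : ℕ → Euc N → ℝ, (∀ n, ContDiff ℝ (⊤ : ℕ∞) (f n)) ∧
    Tendsto (fun n => ∫ ξ in A, ((f n ξ - u ξ) ^ 2 + ‖sphGrad N (f n) ξ - g ξ‖ ^ 2) ∂surf N)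
      atTop (𝓝 0)

/-- The `W^{1,2}(A)` norm of a function `u` with tangential gradient `g`. -/
def W12norm (N : ℕ) (A : Set (Euc N)) (u : Euc N → ℝ) (g : Euc N → Euc N) : ℝ :=
  Real.sqrt (∫ ξ in A, ((u ξ) ^ 2 + ‖g ξ‖ ^ 2) ∂surf N)

/-- `μ₁(A)`: the square root of the first nonzero Neumann eigenvalue, defined variationally as
the infimum of the Rayleigh quotients `‖∇u‖_{L²(A)} / ‖u‖_{L²(A)}` over nonzero mean-zero
`u ∈ W^{1,2}(A)`. -/
def mu1 (N : ℕ) (A : Set (Euc N)) : ℝ :=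
  sInf {ρ | ∃ u g, MemW12 N A u g ∧ (∫ ξ in A, u ξ ∂surf N) = 0 ∧
    (∫ ξ in A, (u ξ) ^ 2 ∂surf N) ≠ 0 ∧
    ρ = Real.sqrt (∫ ξ in A, ‖g ξ‖ ^ 2 ∂surf N) /
      Real.sqrt (∫ ξ in A, (u ξ) ^ 2 ∂surf N)}

/-- The divergence of a vector field `φ : ℝ^N → ℝ^N`. -/
def divg (N : ℕ) (φ : Euc N → Euc N) (x : Euc N) : ℝ :=
  ∑ i : Fin N, fderiv ℝ φ x (EuclideanSpace.single i (1 : ℝ)) i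

/-- The values `∫_E div φ` over admissible test vector fields `φ ∈ C_c^1(F; ℝ^N)`, `‖φ‖ ≤ 1`,
used in the distributional definition of the relative perimeter. -/
def perimTestVals (N : ℕ) (Eset F : Set (Euc N)) : Set ℝ :=
  {p | ∃ φ : Euc N → Euc N, ContDiff ℝ 1 φ ∧ HasCompactSupport φ ∧ tsupport φ ⊆ F ∧
    (∀ x, ‖φ x‖ ≤ 1) ∧ p = ∫ x in Eset, divg N φ x}

/-- The relative perimeter `P(E; F)` of `E` in the open set `F`. -/
def relPerimeter (N : ℕ) (Eset F : Set (Euc N)) : ℝ := sSup (perimTestVals N Eset F)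

/-- `E` is a (measurable) set of finite perimeter in `F`. -/
def HasFinitePerimeter (N : ℕ) (Eset F : Set (Euc N)) : Prop :=
  MeasurableSet Eset ∧ BddAbove (perimTestVals N Eset F)

/-- The star-shaped set `E = {tξ : ξ ∈ A, 0 < t < 1 + u(ξ)}` determined by a radial graph
function `u` over `A ⊆ S^{N-1}`. -/
def radialSet (N : ℕ) (A : Set (Euc N)) (u : Euc N → ℝ) : Set (Euc N) :=
  {x | ∃ ξ ∈ A, ∃ t : ℝ, 0 < t ∧ t < 1 + u ξ ∧ x = t • ξ}

lemma binom_aux (N : ℕ) (hN : 2 ≤ N) {x : ℝ} (hx : |x| ≤ 1) :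
    |(1 + x) ^ N - 1 - N * x| ≤ 2 ^ N * x ^ 2 := by
  have hexp : (1 + x) ^ N = ∑ k ∈ Finset.range (N + 1), x ^ k * (N.choose k : ℝ) := by
    rw [add_comm, add_pow]; simp
  have key : (1 + x) ^ N - 1 - N * x = ∑ k ∈ Finset.Ico 2 (N + 1), x ^ k * (N.choose k : ℝ) := by
    rw [hexp, Finset.range_eq_Ico,
      ← Finset.sum_Ico_consecutive (fun k => x ^ k * (N.choose k : ℝ))
        (by omega : 0 ≤ 2) (by omega : 2 ≤ N + 1)]
    have h2 : ∑ k ∈ Finset.Ico 0 2, x ^ k * (N.choose k : ℝ) = 1 + N * x := by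
      rw [← Finset.range_eq_Ico]
      simp [Finset.sum_range_succ, mul_comm]
    rw [h2]; ring
  rw [key]
  calc |∑ k ∈ Finset.Ico 2 (N+1), x ^ k * (N.choose k : ℝ)|
      ≤ ∑ k ∈ Finset.Ico 2 (N+1), |x ^ k * (N.choose k : ℝ)| :=
        Finset.abs_sum_le_sum_abs _ _
    _ ≤ ∑ k ∈ Finset.Ico 2 (N+1), x ^ 2 * (N.choose k : ℝ) := by
        apply Finset.sum_le_sum
        intro k hk
        rw [abs_mul, abs_pow, Nat.abs_cast]
        apply mul_le_mul_of_nonneg_right _ (Nat.cast_nonneg _)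
        calc |x| ^ k ≤ |x| ^ 2 :=
              pow_le_pow_of_le_one (abs_nonneg x) hx (Finset.mem_Ico.1 hk).1
          _ = x ^ 2 := sq_abs x
    _ = x ^ 2 * ∑ k ∈ Finset.Ico 2 (N+1), (N.choose k : ℝ) := by rw [Finset.mul_sum]
    _ ≤ x ^ 2 * 2 ^ N := by
        apply mul_le_mul_of_nonneg_left _ (sq_nonneg x)
        have h1 : ∑ k ∈ Finset.Ico 2 (N+1), N.choose k ≤ ∑ k ∈ Finset.range (N+1), N.choose k :=
          Finset.sum_le_sum_of_subset
            (by rw [Finset.range_eq_Ico]; exact Finset.Ico_subset_Ico (by omega) le_rfl)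
        have h2 := Nat.sum_range_choose N
        calc (∑ k ∈ Finset.Ico 2 (N+1), (N.choose k : ℝ))
            = ((∑ k ∈ Finset.Ico 2 (N+1), N.choose k : ℕ) : ℝ) := by push_cast; ring
          _ ≤ ((2^N : ℕ) : ℝ) := by exact_mod_cast h1.trans_eq h2
          _ = 2 ^ N := by push_cast; ring
    _ = 2 ^ N * x ^ 2 := mul_comm _ _

lemma cs_aux {α : Type*} [MeasurableSpace α] (μ : Measure α) [IsFiniteMeasure μ]
    (f : α → ℝ) (hf : Integrable f μ) (hf2 : Integrable (fun x => f x ^ 2) μ) :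
    ∫ x, |f x| ∂μ ≤ Real.sqrt (μ Set.univ).toReal * Real.sqrt (∫ x, f x ^ 2 ∂μ) := by
  set m := (μ Set.univ).toReal with hmdef
  have hm0 : 0 ≤ m := ENNReal.toReal_nonneg
  set J := ∫ x, f x ^ 2 ∂μ with hJdef
  have hJ0 : 0 ≤ J := integral_nonneg fun x => sq_nonneg _
  rcases eq_or_lt_of_le hJ0 with hJ | hJ
  · have hzero : (fun x => f x ^ 2) =ᵐ[μ] 0 :=
      (integral_eq_zero_iff_of_nonneg (fun x => sq_nonneg _) hf2).1 hJ.symm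
    have habs : (fun x => |f x|) =ᵐ[μ] 0 := by
      filter_upwards [hzero] with x hx
      have : f x = 0 := by
        have : f x ^ 2 = 0 := hx
        exact pow_eq_zero_iff (by norm_num) |>.1 this
      simp [this]
    have : ∫ x, |f x| ∂μ = 0 := by
      rw [integral_congr_ae habs]; simp
    rw [this, ← hJ]
    simp
  · have hsJpos : 0 < Real.sqrt J := Real.sqrt_pos.2 hJ
    have hmpos : 0 < m := by
      rcases eq_or_lt_of_le hm0 with h | h
      · exfalso
        have hμ : μ = 0 := by
          have : μ Set.univ = 0 := by
            have := measure_lt_top μ Set.univ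
            rcases ENNReal.toReal_eq_zero_iff (μ Set.univ) |>.1 h.symm with h' | h'
            · exact h'
            · exact absurd h' this.ne
          exact Measure.measure_univ_eq_zero.1 this
        rw [hJdef, hμ] at hJ
        simp at hJ
      · exact h
    have hsm : 0 < Real.sqrt m := Real.sqrt_pos.2 hmpos
    set t := Real.sqrt J / Real.sqrt m with htdef
    have ht : 0 < t := div_pos hsJpos hsm
    have hpt : ∀ x, |f x| ≤ f x ^ 2 / (2*t) + t/2 := by
      intro x
      rw [div_add_div _ _ (by positivity) (by norm_num), le_div_iff₀ (by positivity)]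
      nlinarith [sq_nonneg (|f x| - t), sq_abs (f x), abs_nonneg (f x)]
    have hstep : ∫ x, |f x| ∂μ ≤ ∫ x, (f x ^ 2 / (2*t) + t/2) ∂μ :=
      integral_mono hf.abs ((hf2.div_const _).add (integrable_const _)) hpt
    rw [integral_add (hf2.div_const _) (integrable_const _), integral_div,
      integral_const, smul_eq_mul] at hstep
    have hsmm : Real.sqrt m * Real.sqrt m = m := Real.mul_self_sqrt hm0
    have hsJJ : Real.sqrt J * Real.sqrt J = J := Real.mul_self_sqrt hJ0
    have heq : J / (2*t) + m * (t/2) = Real.sqrt m * Real.sqrt J := by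
      rw [htdef]
      field_simp
      nlinarith [hsmm, hsJJ]
    calc ∫ x, |f x| ∂μ ≤ J / (2*t) + m * (t/2) := hstep
      _ = Real.sqrt m * Real.sqrt J := heq

set_option maxHeartbeats 1000000 in
/-- mean bound in the proof of Theorem 1.1: there is `C = C(N) > 0` such
that for every `A ∈ Π₊(η,r)`, every `ε ∈ (0, 1/C)` and every `u ∈ W^{1,2}(A)` with
`|u| < ε` a.e. on `A` satisfying the volume constraint `∫_A (1+u)^N dH^{N-1} = H^{N-1}(A)`,
the mean `ū` satisfies `|ū| ≤ (Cε / ((1−Cε) H^{N-1}(A)^{1/2})) ‖u − ū‖_{L²(A)}`. -/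
theorem mean_value_bound
    (N : ℕ) (hN : 3 ≤ N) (η : ℝ) (hη : 0 < η) (r : ℝ) (hr : 0 < r) :
    ∃ C > 0, ∀ A ∈ PiPlus N η r, ∀ ε : ℝ, 0 < ε → ε < 1 / C →
      ∀ u g, MemW12 N A u g →
        (∀ᵐ ξ ∂(surf N).restrict A, |u ξ| < ε) →
        (∫ ξ in A, (1 + u ξ) ^ N ∂surf N) = ((surf N) A).toReal →
        |(∫ ξ in A, u ξ ∂surf N) / ((surf N) A).toReal| ≤
          C * ε / ((1 - C * ε) * Real.sqrt (((surf N) A).toReal)) *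
            Real.sqrt (∫ ξ in A,
              (u ξ - (∫ ζ in A, u ζ ∂surf N) / ((surf N) A).toReal) ^ 2 ∂surf N) := by
  refine ⟨2 ^ N, by positivity, ?_⟩
  intro A _hA ε hε0 hεC u g hW hae hvol
  have hN2 : 2 ≤ N := by omega
  have hKpos : (0:ℝ) < 2 ^ N := by positivity
  have hK1 : (1:ℝ) ≤ 2 ^ N := by exact_mod_cast Nat.one_le_two_pow
  set m := ((surf N) A).toReal with hmdef
  by_cases hm0 : m = 0
  · simp [hm0]
  -- main case : m > 0
  have hmpos : 0 < m := lt_of_le_of_ne ENNReal.toReal_nonneg (Ne.symm hm0)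
  have hfin : (surf N) A ≠ ⊤ := fun h => hm0 (by rw [hmdef, h, ENNReal.toReal_top])
  haveI hFM : IsFiniteMeasure ((surf N).restrict A) :=
    ⟨by rw [Measure.restrict_apply_univ]; exact hfin.lt_top⟩
  have hε1 : ε ≤ 1 := le_of_lt (lt_of_lt_of_le hεC (by
    rw [div_le_one hKpos]; exact hK1))
  have hKε : 2 ^ N * ε < 1 := by
    rw [lt_div_iff₀ hKpos] at hεC; linarith [hεC]
  -- measurability and integrability
  have humeas : AEStronglyMeasurable u ((surf N).restrict A) := hW.1
  have hu_int : Integrable u ((surf N).restrict A) := by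
    refine Integrable.mono' (integrable_const ε) humeas ?_
    filter_upwards [hae] with ξ hξ
    rw [Real.norm_eq_abs]; exact hξ.le
  have habs_int : Integrable (fun ξ => |u ξ|) ((surf N).restrict A) := hu_int.abs
  have hpow_meas : AEStronglyMeasurable (fun ξ => (1 + u ξ) ^ N) ((surf N).restrict A) := by
    have : Continuous fun y : ℝ => (1 + y) ^ N := by continuity
    exact this.comp_aestronglyMeasurable humeas
  have hpow_int : Integrable (fun ξ => (1 + u ξ) ^ N) ((surf N).restrict A) := by
    refine Integrable.mono' (integrable_const ((2:ℝ) ^ N)) hpow_meas ?_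
    filter_upwards [hae] with ξ hξ
    rw [Real.norm_eq_abs, abs_pow]
    apply pow_le_pow_left₀ (abs_nonneg _)
    calc |1 + u ξ| ≤ 1 + |u ξ| := by
          calc |1 + u ξ| ≤ |(1:ℝ)| + |u ξ| := abs_add_le _ _
            _ = 1 + |u ξ| := by rw [abs_one]
      _ ≤ 2 := by linarith [hξ.le, hε1]
  set I := ∫ ξ in A, u ξ ∂surf N with hIdef
  set ub := I / m with hubdef
  -- the remainder estimate
  have hrem : ∀ᵐ ξ ∂(surf N).restrict A,
      |(1 + u ξ) ^ N - 1 - N * u ξ| ≤ 2 ^ N * ε * |u ξ| := by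
    filter_upwards [hae] with ξ hξ
    have h1 : |u ξ| ≤ 1 := hξ.le.trans hε1
    have h2 := binom_aux N hN2 h1
    have h3 : u ξ ^ 2 ≤ ε * |u ξ| := by
      have : u ξ ^ 2 = |u ξ| * |u ξ| := by rw [← sq_abs]; ring
      rw [this]
      exact mul_le_mul_of_nonneg_right hξ.le (abs_nonneg _)
    calc |(1 + u ξ) ^ N - 1 - N * u ξ| ≤ 2 ^ N * u ξ ^ 2 := h2
      _ ≤ 2 ^ N * (ε * |u ξ|) := mul_le_mul_of_nonneg_left h3 (by positivity)
      _ = 2 ^ N * ε * |u ξ| := by ring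
  -- integral identity
  have hrem_int : Integrable (fun ξ => (1 + u ξ) ^ N - 1 - (N:ℝ) * u ξ) ((surf N).restrict A) :=
    (hpow_int.sub (integrable_const 1)).sub (hu_int.const_mul _)
  have hsub_int : Integrable (fun ξ => (1 + u ξ) ^ N - 1) ((surf N).restrict A) :=
    hpow_int.sub (integrable_const 1)
  have hNu_int : Integrable (fun ξ => (N:ℝ) * u ξ) ((surf N).restrict A) :=
    hu_int.const_mul _
  have hid : ∫ ξ in A, ((1 + u ξ) ^ N - 1 - (N:ℝ) * u ξ) ∂surf N = -((N:ℝ) * I) := by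
    rw [integral_sub hsub_int hNu_int,
      integral_sub hpow_int (integrable_const 1), integral_const, integral_const_mul,
      measureReal_restrict_apply_univ, measureReal_def, hvol, smul_eq_mul, ← hmdef, ← hIdef]
    ring
  -- key estimate : N |I| ≤ 2^N ε ∫|u|
  have hL : (N:ℝ) * |I| ≤ 2 ^ N * ε * ∫ ξ in A, |u ξ| ∂surf N := by
    have h1 : |∫ ξ in A, ((1 + u ξ) ^ N - 1 - (N:ℝ) * u ξ) ∂surf N|
        ≤ ∫ ξ in A, |(1 + u ξ) ^ N - 1 - (N:ℝ) * u ξ| ∂surf N := by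
      simpa [Real.norm_eq_abs] using
        norm_integral_le_integral_norm (μ := (surf N).restrict A)
          (fun ξ => (1 + u ξ) ^ N - 1 - (N:ℝ) * u ξ)
    have h2 : ∫ ξ in A, |(1 + u ξ) ^ N - 1 - (N:ℝ) * u ξ| ∂surf N
        ≤ ∫ ξ in A, 2 ^ N * ε * |u ξ| ∂surf N :=
      integral_mono_ae hrem_int.abs ((habs_int.const_mul _)) hrem
    rw [hid] at h1
    rw [integral_const_mul] at h2
    calc (N:ℝ) * |I| = |(-((N:ℝ) * I))| := by
          rw [abs_neg, abs_mul, Nat.abs_cast]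
      _ ≤ ∫ ξ in A, |(1 + u ξ) ^ N - 1 - (N:ℝ) * u ξ| ∂surf N := h1
      _ ≤ 2 ^ N * ε * ∫ ξ in A, |u ξ| ∂surf N := h2
  -- f := u - ub
  have hf_int : Integrable (fun ξ => u ξ - ub) ((surf N).restrict A) :=
    hu_int.sub (integrable_const _)
  have hf2_int : Integrable (fun ξ => (u ξ - ub) ^ 2) ((surf N).restrict A) := by
    have hmeas : AEStronglyMeasurable (fun ξ => (u ξ - ub) ^ 2) ((surf N).restrict A) := by
      have : Continuous fun y : ℝ => (y - ub) ^ 2 := by continuity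
      exact this.comp_aestronglyMeasurable humeas
    refine Integrable.mono' (integrable_const ((ε + |ub|) ^ 2)) hmeas ?_
    filter_upwards [hae] with ξ hξ
    rw [Real.norm_eq_abs, abs_pow]
    apply pow_le_pow_left₀ (abs_nonneg _)
    calc |u ξ - ub| ≤ |u ξ| + |ub| := abs_sub _ _
      _ ≤ ε + |ub| := by linarith [hξ.le]
  set s := Real.sqrt (∫ ξ in A, (u ξ - ub) ^ 2 ∂surf N) with hsdef
  have hs0 : 0 ≤ s := Real.sqrt_nonneg _
  -- Cauchy-Schwarz
  have hCS : ∫ ξ in A, |u ξ - ub| ∂surf N ≤ Real.sqrt m * s := by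
    have := cs_aux ((surf N).restrict A) (fun ξ => u ξ - ub) hf_int hf2_int
    rwa [Measure.restrict_apply_univ, ← hmdef] at this
  -- triangle : ∫|u| ≤ ∫|u - ub| + m |ub|
  have htri : ∫ ξ in A, |u ξ| ∂surf N ≤ (∫ ξ in A, |u ξ - ub| ∂surf N) + m * |ub| := by
    have h1 : ∫ ξ in A, |u ξ| ∂surf N ≤ ∫ ξ in A, (|u ξ - ub| + |ub|) ∂surf N := by
      refine integral_mono habs_int (hf_int.abs.add (integrable_const _)) ?_
      intro ξ
      calc |u ξ| = |(u ξ - ub) + ub| := by ring_nf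
        _ ≤ |u ξ - ub| + |ub| := abs_add_le _ _
    rwa [integral_add hf_int.abs (integrable_const _), integral_const,
      measureReal_restrict_apply_univ, measureReal_def, ← hmdef, smul_eq_mul] at h1
    -- careful with mul order
  -- combine
  have hIm : |I| = m * |ub| := by
    rw [hubdef, abs_div, abs_of_pos hmpos]
    field_simp
  have hmain : (1 - 2 ^ N * ε) * (m * |ub|) ≤ 2 ^ N * ε * (Real.sqrt m * s) := by
    have hNge1 : (1:ℝ) ≤ (N:ℝ) := by exact_mod_cast (by omega : 1 ≤ N)
    have h1 : m * |ub| ≤ (N:ℝ) * |I| := by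
      rw [hIm]
      nlinarith [abs_nonneg ub, hmpos.le, mul_nonneg hmpos.le (abs_nonneg ub)]
    have hc : (∫ ξ in A, |u ξ| ∂surf N) ≤ Real.sqrt m * s + m * |ub| := by
      linarith [hCS, htri]
    have h3 : (N:ℝ) * |I| ≤ 2 ^ N * ε * (Real.sqrt m * s) + 2 ^ N * ε * (m * |ub|) := by
      calc (N:ℝ) * |I| ≤ 2 ^ N * ε * ∫ ξ in A, |u ξ| ∂surf N := hL
        _ ≤ 2 ^ N * ε * (Real.sqrt m * s + m * |ub|) :=
            mul_le_mul_of_nonneg_left hc (by positivity)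
        _ = 2 ^ N * ε * (Real.sqrt m * s) + 2 ^ N * ε * (m * |ub|) := by ring
    have hgoal : (1 - 2 ^ N * ε) * (m * |ub|) = m * |ub| - 2 ^ N * ε * (m * |ub|) := by ring
    rw [hgoal]
    linarith [h1, h3]
  -- conclude
  have hsm : 0 < Real.sqrt m := Real.sqrt_pos.2 hmpos
  have h1Kε : 0 < 1 - 2 ^ N * ε := by linarith
  rw [show |I / m| = |ub| from by rw [hubdef], div_mul_eq_mul_div,
    le_div_iff₀ (by positivity : (0:ℝ) < (1 - 2 ^ N * ε) * Real.sqrt m)]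
  have hmm : Real.sqrt m * Real.sqrt m = m := Real.mul_self_sqrt hmpos.le
  apply le_of_mul_le_mul_right _ hsm
  calc |ub| * ((1 - 2 ^ N * ε) * Real.sqrt m) * Real.sqrt m
      = (1 - 2 ^ N * ε) * ((Real.sqrt m * Real.sqrt m) * |ub|) := by ring
    _ = (1 - 2 ^ N * ε) * (m * |ub|) := by rw [hmm]
    _ ≤ 2 ^ N * ε * (Real.sqrt m * s) := hmain
    _ = 2 ^ N * ε * s * Real.sqrt m := by ring


end AlmostConvexCones
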